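/- Let (P, y) be a KZ doctrine on a 2-category 𝒞 and L : A ⟶ B a 1-cell. Then L is P-admissible if and only if every P-cocomplete object X admits, and every P-homomorphism between P-cocomplete objects respects, left extensions along L; that is: for every K : A ⟶ X with X P-cocomplete there exist J : B ⟶ X and a 2-cell δ : K ⟶ J·L exhibiting J as a left extension of K along L, and moreover this left extension is respected by every P-homomorphism E : X ⟶ Y into any P-cocomplete object Y. -/

import Mathlib

open CategoryTheory Bicategory

universe w v u

variable {𝒞 : Type u} [Bicategory.{w, v} 𝒞]

/-- A 2-cell `η : I ⟶ L ≫ R` exhibits `R` as a left extension of `I` along `L` when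
pasting with `η` gives a bijection between 2-cells `R ⟶ M` and 2-cells `I ⟶ L ≫ M`. -/
def ExhibitsLeftExt {a b c : 𝒞} (L : a ⟶ b) (I : a ⟶ c) (R : b ⟶ c)
    (η : I ⟶ L ≫ R) : Prop :=
  ∀ M : b ⟶ c, Function.Bijective (fun σ : R ⟶ M => η ≫ L ◁ σ)

/-- The left extension `(R, η)` of `I` along `L` is respected by `E` when the whiskering of
`η` by `E` exhibits `R ≫ E` as a left extension of `I ≫ E` along `L`. -/
def RespectsLeftExt {a b c d : 𝒞} (L : a ⟶ b) (I : a ⟶ c) (R : b ⟶ c)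
    (η : I ⟶ L ≫ R) (E : c ⟶ d) : Prop :=
  ExhibitsLeftExt L (I ≫ E) (R ≫ E) ((η ▷ E) ≫ (α_ L R E).hom)

/-- A 2-cell `η : I ⟶ L ≫ R` exhibits `L` as a left lifting of `I` through `R` when pasting
with `η` gives a bijection between 2-cells `L ⟶ K` and 2-cells `I ⟶ K ≫ R`. -/
def ExhibitsLeftLift {a b c : 𝒞} (R : b ⟶ c) (I : a ⟶ c) (L : a ⟶ b)
    (η : I ⟶ L ≫ R) : Prop :=
  ∀ K : a ⟶ b, Function.Bijective (fun δ : L ⟶ K => η ≫ δ ▷ R)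

/-- The left lifting is absolute when it is preserved by whiskering with any 1-cell `F`. -/
def ExhibitsAbsLeftLift {a b c : 𝒞} (R : b ⟶ c) (I : a ⟶ c) (L : a ⟶ b)
    (η : I ⟶ L ≫ R) : Prop :=
  ∀ {x : 𝒞} (F : x ⟶ a),
    ExhibitsLeftLift R (F ≫ I) (F ≫ L) ((F ◁ η) ≫ (α_ F L R).inv)

/-- A 1-cell is (representably) fully faithful when whiskering by it is bijective on 2-cells. -/
def FullyFaithful1Cell {a b : 𝒞} (F : a ⟶ b) : Prop :=
  ∀ {x : 𝒞} (u v : x ⟶ a), Function.Bijective (fun σ : u ⟶ v => σ ▷ F)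

/-- A KZ doctrine on a 2-category (Marmolejo–Wood style, in terms of left extensions). -/
structure KZDoctrine (𝒞 : Type u) [Bicategory.{w, v} 𝒞] where
  /-- action on objects -/
  P : 𝒞 → 𝒞
  /-- the units -/
  y : ∀ A : 𝒞, A ⟶ P A
  /-- chosen left extensions along the units -/
  ext : ∀ {A C : 𝒞}, (A ⟶ P C) → (P A ⟶ P C)
  /-- the invertible 2-cells exhibiting the chosen left extensions -/
  c : ∀ {A C : 𝒞} (F : A ⟶ P C), F ≅ y A ≫ ext F
  ext_isLeftExt : ∀ {A C : 𝒞} (F : A ⟶ P C),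
    ExhibitsLeftExt (y A) F (ext F) (c F).hom
  /-- (a) the identity 2-cell exhibits `𝟙 (P A)` as a left extension of `y A` along `y A` -/
  y_selfExt : ∀ A : 𝒞, ExhibitsLeftExt (y A) (y A) (𝟙 (P A)) (ρ_ (y A)).inv
  /-- (b) the chosen left extensions respect each other -/
  ext_respects : ∀ {A B C : 𝒞} (F : A ⟶ P B) (G : B ⟶ P C),
    RespectsLeftExt (y A) F (ext F) (c F).hom (ext G)

/-- `lan L` (also denoted `PL`), the chosen left extension of `y B ∘ L` along `y A`. -/
abbrev KZDoctrine.lan (D : KZDoctrine 𝒞) {A B : 𝒞} (L : A ⟶ B) : D.P A ⟶ D.P B :=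
  D.ext (L ≫ D.y B)

/-- An object `X` is `P`-cocomplete when every `G : A ⟶ X` admits a left extension along
`y A` exhibited by an invertible 2-cell, and these left extensions respect the chosen left
extensions of the KZ doctrine. -/
def PCocomplete (D : KZDoctrine 𝒞) (X : 𝒞) : Prop :=
  ∀ {A : 𝒞} (G : A ⟶ X), ∃ (Gb : D.P A ⟶ X) (cG : G ≅ D.y A ≫ Gb),
    ExhibitsLeftExt (D.y A) G Gb cG.hom ∧
    ∀ {A' : 𝒞} (F : A' ⟶ D.P A),
      RespectsLeftExt (D.y A') F (D.ext F) (D.c F).hom Gb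

/-- A 1-cell is a `P`-homomorphism when it respects all left extensions along units. -/
def PHomomorphism (D : KZDoctrine 𝒞) {X Y : 𝒞} (E : X ⟶ Y) : Prop :=
  ∀ {A : 𝒞} (G : A ⟶ X) (Gb : D.P A ⟶ X) (η : G ⟶ D.y A ≫ Gb),
    ExhibitsLeftExt (D.y A) G Gb η → RespectsLeftExt (D.y A) G Gb η E

/-- The data `(R, φ)` witnesses `P`-admissibility of `L`: `φ` exhibits `R` as a left
extension of `y A` along `L`, and this left extension is respected by every left extension
`Hb : P A ⟶ X` along `y A` into every `P`-cocomplete object `X`. -/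
def AdmissibleData (D : KZDoctrine 𝒞) {A B : 𝒞} (L : A ⟶ B) (R : B ⟶ D.P A)
    (φ : D.y A ⟶ L ≫ R) : Prop :=
  ExhibitsLeftExt L (D.y A) R φ ∧
  ∀ {X : 𝒞}, PCocomplete D X →
    ∀ (H : A ⟶ X) (Hb : D.P A ⟶ X) (cH : H ≅ D.y A ≫ Hb),
      ExhibitsLeftExt (D.y A) H Hb cH.hom → RespectsLeftExt L (D.y A) R φ Hb

/-- A 1-cell `L` is `P`-admissible when some `(R, φ)` witnesses its admissibility. -/
def PAdmissible (D : KZDoctrine 𝒞) {A B : 𝒞} (L : A ⟶ B) : Prop :=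
  ∃ (R : B ⟶ D.P A) (φ : D.y A ⟶ L ≫ R), AdmissibleData D L R φ

/-!
Given an admissible `(R, φ)` and `K : A ⟶ X` into a cocomplete `X`, the left extension of `K`
along `L` is `R ≫ K̄`, where `K̄` extends `K` along `y A`: the extension `K̄` respects `(R, φ)` by
admissibility, and for a homomorphism `E` the composite `K̄ ≫ E` is again a left extension along
`y A`, hence also respects `(R, φ)`. Conversely, `P A` is cocomplete, so `y A` has a respected left
extension `(R, φ)` along `L`; admissibility follows because every left extension along a unit into
a cocomplete object is a homomorphism.
-/

section LeftExtensions

variable {a b c d e : 𝒞} {L : a ⟶ b} {I I' : a ⟶ c} {R R' : b ⟶ c}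

lemma ExhibitsLeftExt.of_iso_left {η : I ⟶ L ≫ R} (θ : I' ≅ I)
    (h : ExhibitsLeftExt L I R η) : ExhibitsLeftExt L I' R (θ.hom ≫ η) := by
  intro M
  convert (θ.symm.homCongr (Iso.refl _)).bijective.comp (h M) using 1
  funext σ
  simp

lemma ExhibitsLeftExt.of_iso_right {η : I ⟶ L ≫ R} (ψ : R ≅ R')
    (h : ExhibitsLeftExt L I R η) : ExhibitsLeftExt L I R' (η ≫ L ◁ ψ.hom) := by
  intro M
  convert (h M).comp (ψ.symm.homCongr (Iso.refl M)).bijective using 1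
  funext σ
  simp

lemma ExhibitsLeftExt.unique {η : I ⟶ L ≫ R} {η' : I ⟶ L ≫ R'}
    (h : ExhibitsLeftExt L I R η) (h' : ExhibitsLeftExt L I R' η') :
    ∃ ψ : R ≅ R', η ≫ L ◁ ψ.hom = η' := by
  obtain ⟨σ, hσ⟩ := (h R').2 η'
  obtain ⟨σ', hσ'⟩ := (h' R).2 η
  dsimp only at hσ hσ'
  refine ⟨⟨σ, σ', (h R).1 ?_, (h' R').1 ?_⟩, hσ⟩
  · simp only [whiskerLeft_comp, whiskerLeft_id, Category.comp_id, reassoc_of% hσ, hσ']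
  · simp only [whiskerLeft_comp, whiskerLeft_id, Category.comp_id, reassoc_of% hσ', hσ]

lemma RespectsLeftExt.of_iso_right {η : I ⟶ L ≫ R} {E : c ⟶ d} (ψ : R ≅ R')
    (h : RespectsLeftExt L I R η E) : RespectsLeftExt L I R' (η ≫ L ◁ ψ.hom) E := by
  unfold RespectsLeftExt at h ⊢
  convert h.of_iso_right (whiskerRightIso ψ E) using 1
  simp

lemma RespectsLeftExt.of_exhibitsLeftExt {η : I ⟶ L ≫ R} {η' : I ⟶ L ≫ R'} {E : c ⟶ d}
    (h : ExhibitsLeftExt L I R η) (h' : ExhibitsLeftExt L I R' η')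
    (hE : RespectsLeftExt L I R η E) : RespectsLeftExt L I R' η' E := by
  obtain ⟨ψ, rfl⟩ := h.unique h'
  exact hE.of_iso_right ψ

lemma RespectsLeftExt.of_iso {η : I ⟶ L ≫ R} {E E' : c ⟶ d} (ι : E ≅ E')
    (h : RespectsLeftExt L I R η E) : RespectsLeftExt L I R η E' := by
  unfold RespectsLeftExt at h ⊢
  convert (h.of_iso_left (whiskerLeftIso I ι).symm).of_iso_right (whiskerLeftIso R ι) using 1
  simp only [Iso.symm_hom, whiskerLeftIso_inv, whiskerLeftIso_hom, Category.assoc]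
  rw [whisker_exchange_assoc]
  simp [← whiskerLeft_comp]

lemma RespectsLeftExt.of_iso_left {η : I ⟶ L ≫ R} {E : c ⟶ d} (θ : I' ≅ I)
    (h : RespectsLeftExt L I R η E) : RespectsLeftExt L I' R (θ.hom ≫ η) E := by
  unfold RespectsLeftExt at h ⊢
  convert h.of_iso_left (whiskerRightIso θ E) using 1
  simp

lemma RespectsLeftExt.of_comp {η : I ⟶ L ≫ R} {E : c ⟶ d} {F : d ⟶ e}
    (h : RespectsLeftExt L I R η (E ≫ F)) :
    RespectsLeftExt L (I ≫ E) (R ≫ E) (η ▷ E ≫ (α_ L R E).hom) F := by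
  unfold RespectsLeftExt at h ⊢
  convert (h.of_iso_left (α_ I E F)).of_iso_right (α_ R E F).symm using 1
  simp only [Iso.symm_hom]
  bicategory

end LeftExtensions

section KZ

lemma KZDoctrine.pCocomplete_P (D : KZDoctrine 𝒞) (A : 𝒞) : PCocomplete D (D.P A) :=
  fun G => ⟨D.ext G, D.c G, D.ext_isLeftExt G, fun F => D.ext_respects F G⟩

variable {D : KZDoctrine 𝒞}

/-- By uniqueness of left extensions, `Hb` is isomorphic to the extension of `H` that
`P`-cocompleteness of `X` provides, and so inherits its respect for the chosen extensions. -/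
lemma PCocomplete.pHomomorphism_of_exhibitsLeftExt {A X : 𝒞} (hX : PCocomplete D X)
    {H : A ⟶ X} {Hb : D.P A ⟶ X} {η : H ⟶ D.y A ≫ Hb}
    (hH : ExhibitsLeftExt (D.y A) H Hb η) : PHomomorphism D Hb := by
  intro A' G Gb η' hη'
  obtain ⟨Hb', cH', hH', hresp⟩ := hX H
  obtain ⟨ψ, -⟩ := hH'.unique hH
  exact ((hresp G).of_iso ψ).of_exhibitsLeftExt (D.ext_isLeftExt G) hη'

variable {A B X : 𝒞} {L : A ⟶ B} {R : B ⟶ D.P A} {φ : D.y A ⟶ L ≫ R}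
  {K : A ⟶ X} {Kb : D.P A ⟶ X}

lemma AdmissibleData.exhibitsLeftExt (hRφ : AdmissibleData D L R φ) (hX : PCocomplete D X)
    (cK : K ≅ D.y A ≫ Kb) (hK : ExhibitsLeftExt (D.y A) K Kb cK.hom) :
    ExhibitsLeftExt L K (R ≫ Kb) (cK.hom ≫ φ ▷ Kb ≫ (α_ L R Kb).hom) :=
  ExhibitsLeftExt.of_iso_left cK (hRφ.2 hX K Kb cK hK)

lemma AdmissibleData.respectsLeftExt (hRφ : AdmissibleData D L R φ)
    (cK : K ≅ D.y A ≫ Kb) (hK : ExhibitsLeftExt (D.y A) K Kb cK.hom)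
    {Y : 𝒞} (hY : PCocomplete D Y) {E : X ⟶ Y} (hE : PHomomorphism D E) :
    RespectsLeftExt L K (R ≫ Kb) (cK.hom ≫ φ ▷ Kb ≫ (α_ L R Kb).hom) E := by
  let cKE : K ≫ E ≅ D.y A ≫ Kb ≫ E := whiskerRightIso cK E ≪≫ α_ (D.y A) Kb E
  have hKE : ExhibitsLeftExt (D.y A) (K ≫ E) (Kb ≫ E) cKE.hom := by
    simpa [cKE, RespectsLeftExt] using hE K Kb cK.hom hK
  exact (hRφ.2 hY (K ≫ E) (Kb ≫ E) cKE hKE).of_comp.of_iso_left cK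

end KZ

/-- `L` is `P`-admissible iff every `P`-cocomplete object admits, and every
`P`-homomorphism into a `P`-cocomplete object respects, left extensions along `L`. -/
theorem stmt6 (D : KZDoctrine 𝒞) {A B : 𝒞} (L : A ⟶ B) :
    PAdmissible D L ↔
      ∀ (X : 𝒞), PCocomplete D X → ∀ K : A ⟶ X,
        ∃ (J : B ⟶ X) (δ : K ⟶ L ≫ J),
          ExhibitsLeftExt L K J δ ∧
          ∀ (Y : 𝒞), PCocomplete D Y → ∀ E : X ⟶ Y, PHomomorphism D E →
            RespectsLeftExt L K J δ E := by
  constructor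
  · rintro ⟨R, φ, hRφ⟩ X hX K
    obtain ⟨Kb, cK, hK, -⟩ := hX K
    exact ⟨R ≫ Kb, _, hRφ.exhibitsLeftExt hX cK hK,
      fun Y hY E hE => hRφ.respectsLeftExt cK hK hY hE⟩
  · intro h
    obtain ⟨R, φ, hRφ, hresp⟩ := h (D.P A) (D.pCocomplete_P A) (D.y A)
    exact ⟨R, φ, hRφ, fun hX H Hb cH hH =>
      hresp _ hX Hb (hX.pHomomorphism_of_exhibitsLeftExt hH)⟩
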